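/- Let N be a nonzero integer. If g : ℝ² → ℂ is a smooth doubly periodic function such that the Poisson bracket {f, g} = (1/N)(∂f/∂x·∂g/∂y − ∂f/∂y·∂g/∂x) vanishes identically for each of the four functions f ∈ F_N = {e^{±2πiNx}, e^{±2πiNy}}, then g is constant; i.e., F_N is a complete set of observables on the torus T² = ℝ²/ℤ². -/

import Mathlib

noncomputable section

/-- Partial derivative in the first variable. -/
def pdx (φ : ℝ × ℝ → ℂ) (p : ℝ × ℝ) : ℂ := fderiv ℝ φ p (1, 0)

/-- Partial derivative in the second variable. -/
def pdy (φ : ℝ × ℝ → ℂ) (p : ℝ × ℝ) : ℂ := fderiv ℝ φ p (0, 1)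

/-- The Poisson bracket of the symplectic form `ω = N dx ∧ dy` on `ℝ²`. -/
def PB (N : ℤ) (f g : ℝ × ℝ → ℂ) : ℝ × ℝ → ℂ := fun p =>
  (1 / (N : ℂ)) * (pdx f p * pdy g p - pdy f p * pdx g p)

/-- A function on `ℝ²` is doubly periodic: identified with an element of `C^∞(T²)`. -/
def DoublyPeriodic (f : ℝ × ℝ → ℂ) : Prop :=
  ∀ (m n : ℤ) (x y : ℝ), f (x + m, y + n) = f (x, y)

/-- The complete set `F_N = {e^{±2πiNx}, e^{±2πiNy}}`. -/
def FN (N : ℤ) : Set ((ℝ × ℝ) → ℂ) :=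
  {fun q => Complex.exp (2 * (Real.pi : ℂ) * Complex.I * (N : ℂ) * (q.1 : ℂ)),
   fun q => Complex.exp (-(2 * (Real.pi : ℂ) * Complex.I * (N : ℂ) * (q.1 : ℂ))),
   fun q => Complex.exp (2 * (Real.pi : ℂ) * Complex.I * (N : ℂ) * (q.2 : ℂ)),
   fun q => Complex.exp (-(2 * (Real.pi : ℂ) * Complex.I * (N : ℂ) * (q.2 : ℂ)))}

/-- `F_N` is a complete set of observables on the torus: any smooth doubly
periodic `g` Poisson-commuting with every element of `F_N` is constant. -/
theorem FN_complete (N : ℤ) (hN : N ≠ 0) (g : ℝ × ℝ → ℂ)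
    (hg : ContDiff ℝ (⊤ : ℕ∞) g) (hper : DoublyPeriodic g)
    (hPB : ∀ f ∈ FN N, ∀ p : ℝ × ℝ, PB N f g p = 0) :
    ∃ c : ℂ, ∀ p : ℝ × ℝ, g p = c := by
  set c : ℂ := 2 * (Real.pi : ℂ) * Complex.I * (N : ℂ) with hc
  have hNc : (N : ℂ) ≠ 0 := Int.cast_ne_zero.mpr hN
  have hcne : c ≠ 0 :=
    mul_ne_zero (mul_ne_zero (mul_ne_zero two_ne_zero
      (Complex.ofReal_ne_zero.mpr Real.pi_ne_zero)) Complex.I_ne_zero) hNc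
  -- derivative of the first exponential
  set L1 : (ℝ × ℝ) →L[ℝ] ℂ :=
    c • (Complex.ofRealCLM.comp (ContinuousLinearMap.fst ℝ ℝ ℝ)) with hL1
  set L2 : (ℝ × ℝ) →L[ℝ] ℂ :=
    c • (Complex.ofRealCLM.comp (ContinuousLinearMap.snd ℝ ℝ ℝ)) with hL2
  have key1 : ∀ p : ℝ × ℝ, HasFDerivAt (fun q : ℝ × ℝ => Complex.exp (c * (q.1 : ℂ)))
      (Complex.exp (c * (p.1 : ℂ)) • L1) p := by
    intro p
    have h1 : HasFDerivAt (fun q : ℝ × ℝ => c * (q.1 : ℂ)) L1 p := by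
      have := L1.hasFDerivAt (x := p)
      convert this using 1
      funext q; simp [hL1]
    exact h1.cexp
  have key2 : ∀ p : ℝ × ℝ, HasFDerivAt (fun q : ℝ × ℝ => Complex.exp (c * (q.2 : ℂ)))
      (Complex.exp (c * (p.2 : ℂ)) • L2) p := by
    intro p
    have h1 : HasFDerivAt (fun q : ℝ × ℝ => c * (q.2 : ℂ)) L2 p := by
      have := L2.hasFDerivAt (x := p)
      convert this using 1
      funext q; simp [hL2]
    exact h1.cexp
  have hf1 : (fun q : ℝ × ℝ => Complex.exp (c * (q.1 : ℂ))) ∈ FN N := by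
    left; funext q; ring_nf
    rw [hc]; ring_nf
  have hf3 : (fun q : ℝ × ℝ => Complex.exp (c * (q.2 : ℂ))) ∈ FN N := by
    right; right; left; funext q; ring_nf
    rw [hc]; ring_nf
  have hpy : ∀ p : ℝ × ℝ, pdy g p = 0 := by
    intro p
    have h := hPB _ hf1 p
    have hx : pdx (fun q : ℝ × ℝ => Complex.exp (c * (q.1 : ℂ))) p
        = Complex.exp (c * (p.1 : ℂ)) * c := by
      simp [pdx, (key1 p).fderiv, hL1]
    have hy : pdy (fun q : ℝ × ℝ => Complex.exp (c * (q.1 : ℂ))) p = 0 := by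
      simp [pdy, (key1 p).fderiv, hL1]
    rw [PB, hx, hy] at h
    simpa [hNc, hcne, Complex.exp_ne_zero, sub_eq_zero] using h
  have hpx : ∀ p : ℝ × ℝ, pdx g p = 0 := by
    intro p
    have h := hPB _ hf3 p
    have hx : pdx (fun q : ℝ × ℝ => Complex.exp (c * (q.2 : ℂ))) p = 0 := by
      simp [pdx, (key2 p).fderiv, hL2]
    have hy : pdy (fun q : ℝ × ℝ => Complex.exp (c * (q.2 : ℂ))) p
        = Complex.exp (c * (p.2 : ℂ)) * c := by
      simp [pdy, (key2 p).fderiv, hL2]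
    rw [PB, hx, hy] at h
    simpa [hNc, hcne, Complex.exp_ne_zero, sub_eq_zero] using h
  have hdiff : Differentiable ℝ g := hg.differentiable (by simp)
  have hzero : ∀ p : ℝ × ℝ, fderiv ℝ g p = 0 := by
    intro p
    apply ContinuousLinearMap.ext
    intro v
    have hv : v = v.1 • ((1 : ℝ), (0 : ℝ)) + v.2 • ((0 : ℝ), (1 : ℝ)) := by
      ext <;> simp
    rw [hv, map_add, map_smul, map_smul]
    have h1 := hpx p
    have h2 := hpy p
    simp only [pdx] at h1
    simp only [pdy] at h2
    simp [h1, h2]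
  exact ⟨g (0, 0), fun p => is_const_of_fderiv_eq_zero hdiff hzero p (0, 0)⟩
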